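/- arXiv:2405.11152 — 6 statements merged into one kernel-verified Lean document; each statement's English description precedes it below -/
import Mathlib

section
/- If the hypergraph G=(V,E) is uniformisable, then J is a null subspace of S: the only element of J all of whose entries are nonnegative real numbers is 0. -/
noncomputable section

open scoped ComplexOrder

/-- The index set of the direct sum `S = ⊕_{e ∈ E} ℂ^e`: pairs `(e, x)` with `e ∈ E`, `x ∈ e`. -/
abbrev Idx {V : Type} [DecidableEq V] (E : Finset (Finset V)) : Type :=
  {p : Finset V × V // p.1 ∈ E ∧ p.2 ∈ p.1}

/-- The canonical basis vector `δ_x^e` of `S`. -/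
def delta {V : Type} [DecidableEq V] (E : Finset (Finset V)) (e : Finset V) (x : V) :
    Idx E → ℂ :=
  fun i => if i.1 = (e, x) then 1 else 0

/-- The element `1_e := ∑_{x ∈ e} δ_x^e` of `S`. -/
def oneEdge {V : Type} [DecidableEq V] (E : Finset (Finset V)) (e : Finset V) :
    Idx E → ℂ :=
  ∑ x ∈ e, delta E e x

/-- The subspace `J` of `S`, spanned by the elements `1_e − 1_f` and `δ_x^e − δ_x^f`. -/
def Jsub {V : Type} [DecidableEq V] (E : Finset (Finset V)) : Submodule ℂ (Idx E → ℂ) :=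
  Submodule.span ℂ
    ({u | ∃ e ∈ E, ∃ f ∈ E, u = oneEdge E e - oneEdge E f} ∪
     {u | ∃ e ∈ E, ∃ f ∈ E, ∃ x, x ∈ e ∧ x ∈ f ∧ u = delta E e x - delta E f x})

theorem stmt1 (V : Type) [Fintype V] [DecidableEq V] (E : Finset (Finset V))
    (hEne : E.Nonempty) (hene : ∀ e ∈ E, e.Nonempty)
    (hunif : ∃ h : V → ℕ, (∀ x, 1 ≤ h x) ∧
      ∀ e ∈ E, ∀ f ∈ E, ∑ x ∈ e, h x = ∑ x ∈ f, h x)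
    (u : Idx E → ℂ) (hu : u ∈ Jsub E) (hpos : ∀ i, 0 ≤ u i) :
    u = 0 := by
  obtain ⟨h, h1, huni⟩ := hunif
  have hδ : ∀ e ∈ E, ∀ x ∈ e,
      ∑ i : Idx E, (h i.1.2 : ℂ) * delta E e x i = (h x : ℂ) := by
    intro e he x hx
    rw [Fintype.sum_eq_single (⟨(e, x), he, hx⟩ : Idx E)]
    · simp [delta]
    · intro i hi
      have hne : i.1 ≠ (e, x) := fun hh => hi (Subtype.ext hh)
      simp [delta, hne]
  have key : ∑ i : Idx E, (h i.1.2 : ℂ) * u i = 0 := by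
    clear hpos
    induction hu using Submodule.span_induction with
    | mem v hv =>
      have hone : ∀ e ∈ E, ∑ i : Idx E, (h i.1.2 : ℂ) * oneEdge E e i
          = ∑ x ∈ e, (h x : ℂ) := by
        intro e he
        simp only [oneEdge, Finset.sum_apply, Finset.mul_sum]
        rw [Finset.sum_comm]
        exact Finset.sum_congr rfl fun x hx => hδ e he x hx
      rcases hv with ⟨e, he, f, hf, rfl⟩ | ⟨e, he, f, hf, x, hxe, hxf, rfl⟩
      · simp only [Pi.sub_apply, mul_sub, Finset.sum_sub_distrib]
        rw [hone e he, hone f hf, sub_eq_zero]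
        exact_mod_cast congrArg (Nat.cast : ℕ → ℂ) (huni e he f hf)
      · simp only [Pi.sub_apply, mul_sub, Finset.sum_sub_distrib]
        rw [hδ e he x hxe, hδ f hf x hxf, sub_self]
    | zero => simp
    | add v w _ _ hv hw => simp [mul_add, Finset.sum_add_distrib, hv, hw]
    | smul c v _ hv =>
      have : ∑ i : Idx E, (h i.1.2 : ℂ) * (c • v) i
          = c * ∑ i : Idx E, (h i.1.2 : ℂ) * v i := by
        rw [Finset.mul_sum]
        exact Finset.sum_congr rfl fun i _ => by simp [mul_left_comm]
      rw [this, hv, mul_zero]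
  have hterm : ∀ i : Idx E, (h i.1.2 : ℂ) * u i = 0 := by
    rw [Finset.sum_eq_zero_iff_of_nonneg] at key
    · intro i; exact key i (Finset.mem_univ i)
    · intro i _
      exact mul_nonneg (by exact_mod_cast Nat.cast_nonneg (h i.1.2)) (hpos i)
  funext i
  have hh : (h i.1.2 : ℂ) ≠ 0 := by
    exact Nat.cast_ne_zero.mpr (Nat.one_le_iff_ne_zero.mp (h1 i.1.2))
  have := hterm i
  rcases mul_eq_zero.mp this with hc | hc
  · exact absurd hc hh
  · simpa using hc
end
end

section
/- If the hypergraph G=(V,E) is r-uniform for some r ≥ 1, then J is a null subspace of S: the only element of J all of whose entries are nonnegative real numbers is 0. -/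
noncomputable section

open scoped ComplexOrder

lemma sum_delta {V : Type} [Fintype V] [DecidableEq V] (E : Finset (Finset V))
    (e : Finset V) (x : V) (he : e ∈ E) (hx : x ∈ e) :
    ∑ i : Idx E, delta E e x i = 1 := by
  classical
  rw [Finset.sum_eq_single_of_mem (⟨(e, x), he, hx⟩ : Idx E) (Finset.mem_univ _)]
  · simp [delta]
  · intro b _ hb
    have : b.1 ≠ (e, x) := fun h => hb (Subtype.ext h)
    simp [delta, this]

lemma sum_oneEdge {V : Type} [Fintype V] [DecidableEq V] (E : Finset (Finset V))
    (e : Finset V) (he : e ∈ E) :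
    ∑ i : Idx E, oneEdge E e i = (e.card : ℂ) := by
  simp only [oneEdge, Finset.sum_apply]
  rw [Finset.sum_comm, Finset.sum_congr rfl (fun x hx => sum_delta E e x he hx)]
  simp

theorem stmt2 (V : Type) [Fintype V] [DecidableEq V] (E : Finset (Finset V))
    (hEne : E.Nonempty) (hene : ∀ e ∈ E, e.Nonempty)
    (r : ℕ) (hr : 1 ≤ r) (hunif : ∀ e ∈ E, e.card = r)
    (u : Idx E → ℂ) (hu : u ∈ Jsub E) (hpos : ∀ i, 0 ≤ u i) :
    u = 0 := by
  classical
  have key : ∀ w, w ∈ Jsub E → ∑ i : Idx E, w i = 0 := by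
    intro w hw
    induction hw using Submodule.span_induction with
    | mem v hv =>
      rcases hv with ⟨e, he, f, hf, rfl⟩ | ⟨e, he, f, hf, x, hxe, hxf, rfl⟩
      · simp only [Pi.sub_apply, Finset.sum_sub_distrib, sum_oneEdge E e he,
          sum_oneEdge E f hf, hunif e he, hunif f hf, sub_self]
      · simp only [Pi.sub_apply, Finset.sum_sub_distrib, sum_delta E e x he hxe,
          sum_delta E f x hf hxf, sub_self]
    | zero => simp
    | add v w _ _ hv hw => simp [Finset.sum_add_distrib, hv, hw]
    | smul c v _ hv => simp [← Finset.mul_sum, hv]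
  have := (Finset.sum_eq_zero_iff_of_nonneg (fun i _ => hpos i)).mp (key u hu)
  funext i
  exact this i (Finset.mem_univ i)
end
end

section
/- Let G=(V,E) be a contextuality scenario, H a complex Hilbert space, and A = [A_{x,x'}]_{x,x'∈V} a matrix of bounded operators on H that is positive when regarded as an operator on the Hilbert-space direct sum ⊕_{x∈V} H. Then the following are equivalent: (i) Σ_{x∈e} A_{x,x} = I_H for every e ∈ E (i.e., A is a G-stochastic operator matrix); (ii) there exist a complex Hilbert space K and bounded operators U_x : H → K (x ∈ V) such that Σ_{x∈e} U_x* U_x = I_H for every e ∈ E and A_{x,x'} = U_x* U_{x'} for all x, x' ∈ V. -/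
/-! A positive operator `P` on `⊕_{x ∈ V} H` factors as `P = S* S`; the "columns"
`U_x = S ∘ ι_x` of `S`, with `ι_x` the inclusion of the `x`-th summand, then satisfy
`U_x* U_{x'} = π_x P ι_{x'} = A_{x,x'}`. Under this Gram representation the two normalisation
conditions on the diagonal are literally the same. -/

noncomputable section

instance piLpCompleteSpace {ι : Type} (p : ENNReal) (β : ι → Type)
    [∀ i, UniformSpace (β i)] [∀ i, CompleteSpace (β i)] :
    CompleteSpace (PiLp p β) :=
  (PiLp.uniformEquiv p β).completeSpace_iff.2 inferInstance

structure HilbertC where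
  carrier : Type
  [normed : NormedAddCommGroup carrier]
  [ips : InnerProductSpace ℂ carrier]
  [complete : CompleteSpace carrier]

attribute [instance] HilbertC.normed HilbertC.ips HilbertC.complete

/-- The block operator on the Hilbert-space direct sum `⊕_{i ∈ ι} H` (realised as
`PiLp 2 (fun _ : ι => H)`) associated with a matrix `T` of bounded operators on `H`. -/
def blockOp {ι : Type} [Fintype ι] [DecidableEq ι]
    {H : Type} [NormedAddCommGroup H] [InnerProductSpace ℂ H] [CompleteSpace H]
    (T : ι → ι → H →L[ℂ] H) :
    PiLp 2 (fun _ : ι => H) →L[ℂ] PiLp 2 (fun _ : ι => H) :=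
  ((PiLp.continuousLinearEquiv 2 ℂ (fun _ : ι => H)).symm.toContinuousLinearMap).comp
    ((ContinuousLinearMap.pi
        (fun p => ∑ q, (T p q).comp (ContinuousLinearMap.proj q))).comp
      (PiLp.continuousLinearEquiv 2 ℂ (fun _ : ι => H)).toContinuousLinearMap)

open ContinuousLinearMap

section

variable {ι 𝕜 : Type*} [RCLike 𝕜] [Fintype ι] [DecidableEq ι] {β : ι → Type*}
  [∀ i, NormedAddCommGroup (β i)] [∀ i, InnerProductSpace 𝕜 (β i)] [∀ i, CompleteSpace (β i)]

theorem PiLp.adjoint_proj_apply (i : ι) (b : β i) :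
    adjoint (PiLp.proj 2 (𝕜 := 𝕜) β i) b = PiLp.single 2 i b := by
  refine ext_inner_left 𝕜 fun f => ?_
  rw [adjoint_inner_right, PiLp.inner_apply, Finset.sum_eq_single i]
  · simp
  · intro j _ hj
    simp [PiLp.single_eq_of_ne 2 hj]
  · simp

end

section

variable {ι : Type} [Fintype ι] [DecidableEq ι]
  {H : Type} [NormedAddCommGroup H] [InnerProductSpace ℂ H] [CompleteSpace H]

theorem proj_comp_blockOp_comp_adjoint_proj (T : ι → ι → H →L[ℂ] H) (x x' : ι) :
    PiLp.proj 2 (fun _ : ι => H) x ∘L blockOp T ∘L adjoint (PiLp.proj 2 (fun _ : ι => H) x') =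
      T x x' := by
  ext h
  simp [blockOp, PiLp.adjoint_proj_apply, apply_ite]

theorem ContinuousLinearMap.IsPositive.exists_eq_adjoint_comp_self {E : Type*}
    [NormedAddCommGroup E] [InnerProductSpace ℂ E] [CompleteSpace E] {T : E →L[ℂ] E}
    (hT : T.IsPositive) : ∃ S : E →L[ℂ] E, T = adjoint S ∘L S := by
  obtain ⟨S, hS⟩ := CStarAlgebra.nonneg_iff_eq_star_mul_self.mp ((nonneg_iff_isPositive T).mpr hT)
  exact ⟨S, by rwa [← star_eq_adjoint]⟩

theorem exists_eq_adjoint_comp_of_isPositive_blockOp {A : ι → ι → H →L[ℂ] H}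
    (hA : (blockOp A).IsPositive) :
    ∃ (K : HilbertC) (U : ι → H →L[ℂ] K.carrier), ∀ x x', A x x' = adjoint (U x) ∘L U x' := by
  obtain ⟨S, hS⟩ := hA.exists_eq_adjoint_comp_self
  refine ⟨⟨PiLp 2 (fun _ : ι => H)⟩, fun x => S ∘L adjoint (PiLp.proj 2 _ x), fun x x' => ?_⟩
  rw [adjoint_comp, adjoint_adjoint, ← proj_comp_blockOp_comp_adjoint_proj A x x', hS]
  rfl

end

theorem stmt3_general (V : Type) [Fintype V] [DecidableEq V] (E : Finset (Finset V))
    (H : Type) [NormedAddCommGroup H] [InnerProductSpace ℂ H] [CompleteSpace H]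
    (A : V → V → H →L[ℂ] H)
    (hpos : (blockOp A).IsPositive) :
    (∀ e ∈ E, ∑ x ∈ e, A x x = 1) ↔
      ∃ (K : HilbertC) (U : V → H →L[ℂ] K.carrier),
        (∀ e ∈ E, ∑ x ∈ e, (ContinuousLinearMap.adjoint (U x)).comp (U x) = 1) ∧
        ∀ x x' : V, A x x' = (ContinuousLinearMap.adjoint (U x)).comp (U x') := by
  constructor
  · intro hA
    obtain ⟨K, U, hAU⟩ := exists_eq_adjoint_comp_of_isPositive_blockOp hpos
    exact ⟨K, U, fun e he => by simpa only [hAU] using hA e he, hAU⟩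
  · rintro ⟨K, U, hU, hAU⟩ e he
    simpa only [hAU] using hU e he

theorem stmt3 (V : Type) [Fintype V] [DecidableEq V] (E : Finset (Finset V))
    (hEne : E.Nonempty) (hene : ∀ e ∈ E, e.Nonempty)
    (hcover : ∀ x : V, ∃ e ∈ E, x ∈ e)
    (H : Type) [NormedAddCommGroup H] [InnerProductSpace ℂ H] [CompleteSpace H]
    (A : V → V → H →L[ℂ] H)
    (hpos : (blockOp A).IsPositive) :
    (∀ e ∈ E, ∑ x ∈ e, A x x = 1) ↔
      ∃ (K : HilbertC) (U : V → H →L[ℂ] K.carrier),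
        (∀ e ∈ E, ∑ x ∈ e, (ContinuousLinearMap.adjoint (U x)).comp (U x) = 1) ∧
        ∀ x x' : V, A x x' = (ContinuousLinearMap.adjoint (U x)).comp (U x') :=
  stmt3_general V E H A hpos
end
end

section
/- Let G=(V,E) and H=(W,F) be contextuality scenarios, K a complex Hilbert space, and (P_{x,y})_{x∈V,y∈W} a family of orthogonal projections on K such that Σ_{(x,y)∈e×f} P_{x,y} = I_K for every e ∈ E and f ∈ F, and which satisfies the no-signalling conditions Σ_{x∈e} P_{x,y} = Σ_{x∈e'} P_{x,y} for all y ∈ W, e, e' ∈ E, and Σ_{y∈f} P_{x,y} = Σ_{y∈f'} P_{x,y} for all x ∈ V, f, f' ∈ F. For x ∈ V set P_x := Σ_{y∈f} P_{x,y} (any f ∈ F) and for y ∈ W set Q_y := Σ_{x∈e} P_{x,y} (any e ∈ E). Then every P_x and every Q_y is an orthogonal projection, Σ_{x∈e} P_x = I_K for every e ∈ E, Σ_{y∈f} Q_y = I_K for every f ∈ F, and P_x Q_y = Q_y P_x = P_{x,y} for all x ∈ V and y ∈ W. -/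
noncomputable section

open scoped InnerProductSpace

lemma ortho_of_sum_one {ι : Type*} [DecidableEq ι]
    {K : Type} [NormedAddCommGroup K] [InnerProductSpace ℂ K] [CompleteSpace K]
    (s : Finset ι) (p : ι → K →L[ℂ] K)
    (hsa : ∀ i ∈ s, IsSelfAdjoint (p i)) (hid : ∀ i ∈ s, IsIdempotentElem (p i))
    (hsum : ∑ i ∈ s, p i = 1) :
    ∀ i ∈ s, ∀ j ∈ s, i ≠ j → p i * p j = 0 := by
  intro i hi j hj hij
  ext u
  simp only [ContinuousLinearMap.mul_apply, ContinuousLinearMap.zero_apply]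
  set v := p j u with hv
  have hpjv : p j v = v := by
    rw [hv]
    calc p j (p j u) = (p j * p j) u := rfl
      _ = p j u := by rw [hid j hj]
  have key : ∀ k ∈ s, (⟪p k v, v⟫_ℂ) = (‖p k v‖ ^ 2 : ℝ) := by
    intro k hk
    have hsym := (ContinuousLinearMap.isSelfAdjoint_iff_isSymmetric.mp (hsa k hk))
    have : p k (p k v) = p k v := by
      calc p k (p k v) = (p k * p k) v := rfl
        _ = p k v := by rw [hid k hk]
    calc ⟪p k v, v⟫_ℂ = ⟪p k (p k v), v⟫_ℂ := by rw [this]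
      _ = ⟪p k v, p k v⟫_ℂ := hsym _ _
      _ = (‖p k v‖ ^ 2 : ℝ) := by
          rw [inner_self_eq_norm_sq_to_K]; norm_num
  have hvv : (‖v‖ ^ 2 : ℝ) = ∑ k ∈ s, (‖p k v‖ ^ 2 : ℝ) := by
    have h1 : (⟪v, v⟫_ℂ) = ∑ k ∈ s, ⟪p k v, v⟫_ℂ := by
      have : (∑ k ∈ s, p k) v = v := by rw [hsum]; rfl
      calc ⟪v, v⟫_ℂ = ⟪(∑ k ∈ s, p k) v, v⟫_ℂ := by rw [this]
        _ = ∑ k ∈ s, ⟪p k v, v⟫_ℂ := by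
            rw [ContinuousLinearMap.sum_apply, sum_inner]
    have h2 : (⟪v, v⟫_ℂ) = ((∑ k ∈ s, ‖p k v‖ ^ 2 : ℝ) : ℂ) := by
      rw [h1, Finset.sum_congr rfl key]; push_cast; ring
    have := h2
    rw [inner_self_eq_norm_sq_to_K] at this
    rw [← RCLike.ofReal_pow] at this
    exact RCLike.ofReal_inj.mp this
  have hsplit : (‖v‖ ^ 2 : ℝ) = ‖p j v‖ ^ 2 + ∑ k ∈ s.erase j, ‖p k v‖ ^ 2 := by
    rw [hvv, ← Finset.add_sum_erase _ _ hj]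
  rw [hpjv] at hsplit
  have hzero : ∑ k ∈ s.erase j, (‖p k v‖ ^ 2 : ℝ) = 0 := by linarith
  have h0 : ∀ k ∈ s.erase j, (‖p k v‖ ^ 2 : ℝ) = 0 := by
    intro k hk
    exact (Finset.sum_eq_zero_iff_of_nonneg (fun k _ => by positivity)).mp hzero k hk
  have hi' : i ∈ s.erase j := Finset.mem_erase.mpr ⟨hij, hi⟩
  have := h0 i hi'
  have : ‖p i v‖ = 0 := by nlinarith [norm_nonneg (p i v)]
  simpa using norm_eq_zero.mp this

theorem stmt8 (V W : Type) [Fintype V] [Fintype W] [DecidableEq V] [DecidableEq W]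
    (E : Finset (Finset V)) (F : Finset (Finset W))
    (hEne : E.Nonempty) (hene : ∀ e ∈ E, e.Nonempty)
    (hFne : F.Nonempty) (hfne : ∀ f ∈ F, f.Nonempty)
    (hcoverV : ∀ x : V, ∃ e ∈ E, x ∈ e) (hcoverW : ∀ y : W, ∃ f ∈ F, y ∈ f)
    (K : Type) [NormedAddCommGroup K] [InnerProductSpace ℂ K] [CompleteSpace K]
    (P : V → W → K →L[ℂ] K)
    (hproj : ∀ x y, IsSelfAdjoint (P x y) ∧ IsIdempotentElem (P x y))
    (hsum : ∀ e ∈ E, ∀ f ∈ F, ∑ x ∈ e, ∑ y ∈ f, P x y = 1)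
    (hnsV : ∀ y : W, ∀ e ∈ E, ∀ e' ∈ E, ∑ x ∈ e, P x y = ∑ x ∈ e', P x y)
    (hnsW : ∀ x : V, ∀ f ∈ F, ∀ f' ∈ F, ∑ y ∈ f, P x y = ∑ y ∈ f', P x y)
    (Px : V → K →L[ℂ] K) (Qy : W → K →L[ℂ] K)
    (hPx : ∀ x : V, ∀ f ∈ F, Px x = ∑ y ∈ f, P x y)
    (hQy : ∀ y : W, ∀ e ∈ E, Qy y = ∑ x ∈ e, P x y) :
    (∀ x, IsSelfAdjoint (Px x) ∧ IsIdempotentElem (Px x)) ∧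
    (∀ y, IsSelfAdjoint (Qy y) ∧ IsIdempotentElem (Qy y)) ∧
    (∀ e ∈ E, ∑ x ∈ e, Px x = 1) ∧
    (∀ f ∈ F, ∑ y ∈ f, Qy y = 1) ∧
    (∀ (x : V) (y : W), Px x * Qy y = P x y ∧ Qy y * Px x = P x y) := by
  obtain ⟨f0, hf0⟩ := hFne
  obtain ⟨e0, he0⟩ := hEne
  -- key orthogonality
  have horth : ∀ e ∈ E, ∀ f ∈ F, ∀ x ∈ e, ∀ y ∈ f, ∀ x' ∈ e, ∀ y' ∈ f,
      (x, y) ≠ (x', y') → P x y * P x' y' = 0 := by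
    intro e he f hf x hx y hy x' hx' y' hy' hne
    have hsum' : ∑ z ∈ e ×ˢ f, P z.1 z.2 = 1 := by
      rw [Finset.sum_product]; exact hsum e he f hf
    exact ortho_of_sum_one (e ×ˢ f) (fun z => P z.1 z.2)
      (fun z _ => (hproj z.1 z.2).1) (fun z _ => (hproj z.1 z.2).2) hsum'
      (x, y) (Finset.mem_product.mpr ⟨hx, hy⟩)
      (x', y') (Finset.mem_product.mpr ⟨hx', hy'⟩) hne
  have hPxproj : ∀ x, IsSelfAdjoint (Px x) ∧ IsIdempotentElem (Px x) := by
    intro x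
    obtain ⟨e, he, hxe⟩ := hcoverV x
    constructor
    · rw [hPx x f0 hf0, IsSelfAdjoint, star_sum]
      exact Finset.sum_congr rfl fun y _ => (hproj x y).1
    · rw [IsIdempotentElem, hPx x f0 hf0, Finset.sum_mul_sum]
      refine Finset.sum_congr rfl fun y hy => ?_
      rw [Finset.sum_eq_single_of_mem y hy (fun b hb hby =>
        horth e he f0 hf0 x hxe y hy x hxe b hb (by simp [Prod.ext_iff, Ne.symm hby]))]
      exact (hproj x y).2
  have hQyproj : ∀ y, IsSelfAdjoint (Qy y) ∧ IsIdempotentElem (Qy y) := by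
    intro y
    obtain ⟨f, hf, hyf⟩ := hcoverW y
    constructor
    · rw [hQy y e0 he0, IsSelfAdjoint, star_sum]
      exact Finset.sum_congr rfl fun x _ => (hproj x y).1
    · rw [IsIdempotentElem, hQy y e0 he0, Finset.sum_mul_sum]
      refine Finset.sum_congr rfl fun x hx => ?_
      rw [Finset.sum_eq_single_of_mem x hx (fun b hb hbx =>
        horth e0 he0 f hf x hx y hyf b hb y hyf (by simp [Prod.ext_iff, Ne.symm hbx]))]
      exact (hproj x y).2
  refine ⟨hPxproj, hQyproj, ?_, ?_, ?_⟩
  · intro e he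
    calc ∑ x ∈ e, Px x = ∑ x ∈ e, ∑ y ∈ f0, P x y :=
          Finset.sum_congr rfl fun x _ => hPx x f0 hf0
      _ = 1 := hsum e he f0 hf0
  · intro f hf
    calc ∑ y ∈ f, Qy y = ∑ y ∈ f, ∑ x ∈ e0, P x y :=
          Finset.sum_congr rfl fun y _ => hQy y e0 he0
      _ = ∑ x ∈ e0, ∑ y ∈ f, P x y := Finset.sum_comm
      _ = 1 := hsum e0 he0 f hf
  · intro x y
    obtain ⟨e, he, hxe⟩ := hcoverV x
    obtain ⟨f, hf, hyf⟩ := hcoverW y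
    constructor
    · rw [hPx x f hf, hQy y e he, Finset.sum_mul_sum]
      rw [Finset.sum_eq_single_of_mem y hyf (fun b hb hby => Finset.sum_eq_zero fun x' hx' =>
        horth e he f hf x hxe b hb x' hx' y hyf (by simp [Prod.ext_iff]; intro _; exact hby))]
      rw [Finset.sum_eq_single_of_mem x hxe (fun b hb hbx =>
        horth e he f hf x hxe y hyf b hb y hyf (by simp [Prod.ext_iff, Ne.symm hbx]))]
      exact (hproj x y).2
    · rw [hPx x f hf, hQy y e he, Finset.sum_mul_sum]
      rw [Finset.sum_eq_single_of_mem x hxe (fun b hb hbx => Finset.sum_eq_zero fun y' hy' =>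
        horth e he f hf b hb y hyf x hxe y' hy' (by simp [Prod.ext_iff, hbx]))]
      rw [Finset.sum_eq_single_of_mem y hyf (fun b hb hby =>
        horth e he f hf x hxe y hyf x hxe b hb (by simp [Prod.ext_iff, Ne.symm hby]))]
      exact (hproj x y).2
end
end

section
/- Let G=(V,E) be an r-uniform hypergraph with r ≥ 1. Then J = { u ∈ S : ⟨p,u⟩ = 0 for every probabilistic model p of G }, where ⟨p,u⟩ := Σ_{e∈E} Σ_{x∈e} p(x) u_x^e. -/
/-!
A linear functional on `S` vanishes on `J` exactly when it is the pairing with some `c : V → ℂ`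
whose edge sums `∑_{x ∈ e} c x` are all equal. Every such `c` lies in the complex span of the
probabilistic models: subtracting a multiple of the uniform model `1/r` leaves edge sums `0`; the
real and imaginary parts of such a function are real functions `q` with edge sums `0`, and `q` is
`ε⁻¹` times the difference of the models `1/r + ε q` and `1/r` when `r ≥ 2`, while for `r = 1` it
vanishes on every vertex lying in an edge. Duality then identifies `J` with the annihilator of
the models.
-/

noncomputable section

open scoped ComplexOrder

namespace Hypergraph

variable {V : Type} {E : Finset (Finset V)}

def IsModel (E : Finset (Finset V)) (p : V → ℝ) : Prop :=
  (∀ x, 0 ≤ p x ∧ p x ≤ 1) ∧ ∀ e ∈ E, ∑ x ∈ e, p x = 1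

theorem isModel_const {r : ℕ} (hr : 1 ≤ r) (hunif : ∀ e ∈ E, e.card = r) :
    IsModel E fun _ => 1 / (r : ℝ) := by
  have hr' : (1 : ℝ) ≤ r := by exact_mod_cast hr
  refine ⟨fun _ => ⟨by positivity, div_le_one_of_le₀ hr' (by positivity)⟩, fun e he => ?_⟩
  rw [Finset.sum_const, hunif e he, nsmul_eq_mul]
  field_simp

theorem exists_isModel_const_add_smul [Finite V] {r : ℕ} (hr : 2 ≤ r)
    (hunif : ∀ e ∈ E, e.card = r) (q : V → ℝ) (hq : ∀ e ∈ E, ∑ x ∈ e, q x = 0) :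
    ∃ ε > 0, IsModel E fun x => 1 / (r : ℝ) + ε * q x := by
  obtain ⟨M, hM⟩ := Finite.exists_le fun x => |q x|
  have hr' : (2 : ℝ) ≤ r := by exact_mod_cast hr
  set ε := 1 / (r * (|M| + 1)) with hε
  have hεpos : 0 < ε := by positivity
  have hsmall : ∀ x, |ε * q x| ≤ 1 / r := by
    intro x
    rw [abs_mul, abs_of_pos hεpos, hε, div_mul_eq_mul_div, one_mul,
      div_le_div_iff₀ (by positivity) (by positivity)]
    nlinarith [hM x, le_abs_self M, abs_nonneg M]
  refine ⟨ε, hεpos, fun x => ?_, fun e he => ?_⟩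
  · have hrinv : 1 / (r : ℝ) ≤ 1 / 2 := one_div_le_one_div_of_le (by norm_num) hr'
    have := abs_le.mp (hsmall x)
    constructor <;> linarith
  · rw [Finset.sum_add_distrib, ← Finset.mul_sum, hq e he, mul_zero, add_zero]
    exact (isModel_const (by omega) hunif).2 e he

variable [DecidableEq V]

theorem delta_eq_single {e : Finset V} {x : V} (he : e ∈ E) (hx : x ∈ e) :
    delta E e x = Pi.single (⟨(e, x), he, hx⟩ : Idx E) 1 := by
  ext i
  simp only [delta, Pi.single_apply, ← Subtype.val_inj]

variable [Fintype V]

def pairing (E : Finset (Finset V)) : (V → ℂ) →ₗ[ℂ] (Idx E → ℂ) →ₗ[ℂ] ℂ :=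
  (dotProductBilin ℂ ℂ).comp (LinearMap.funLeft ℂ ℂ fun i : Idx E => i.1.2)

theorem pairing_apply (c : V → ℂ) (u : Idx E → ℂ) :
    pairing E c u = ∑ i : Idx E, c i.1.2 * u i :=
  rfl

theorem pairing_delta (c : V → ℂ) {e : Finset V} {x : V} (he : e ∈ E) (hx : x ∈ e) :
    pairing E c (delta E e x) = c x := by
  simp [delta_eq_single he hx, pairing_apply, Pi.single_apply]

theorem pairing_oneEdge (c : V → ℂ) {e : Finset V} (he : e ∈ E) :
    pairing E c (oneEdge E e) = ∑ x ∈ e, c x := by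
  rw [oneEdge, map_sum]
  exact Finset.sum_congr rfl fun x hx => pairing_delta c he hx

theorem pairing_eq_zero_of_forall_mem {c : V → ℂ} (hc : ∀ e ∈ E, ∀ x ∈ e, c x = 0)
    (u : Idx E → ℂ) : pairing E c u = 0 :=
  Finset.sum_eq_zero fun i _ => by rw [LinearMap.funLeft_apply, hc _ i.2.1 _ i.2.2, zero_mul]

theorem Jsub_le_ker_pairing {c : V → ℂ} (hc : ∀ e ∈ E, ∀ f ∈ E, ∑ x ∈ e, c x = ∑ x ∈ f, c x) :
    Jsub E ≤ LinearMap.ker (pairing E c) := by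
  rw [Jsub, Submodule.span_le]
  rintro _ (⟨e, he, f, hf, rfl⟩ | ⟨e, he, f, hf, x, hxe, hxf, rfl⟩) <;>
    simp only [SetLike.mem_coe, LinearMap.mem_ker, map_sub, sub_eq_zero]
  · rw [pairing_oneEdge c he, pairing_oneEdge c hf, hc e he f hf]
  · rw [pairing_delta c he hxe, pairing_delta c hf hxf]

-- A functional vanishing on `J` takes the same value on `δ_x^e` for every edge `e ∋ x`.
theorem exists_pairing_eq_of_le_ker (ψ : Module.Dual ℂ (Idx E → ℂ))
    (hψ : Jsub E ≤ LinearMap.ker ψ) :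
    ∃ c : V → ℂ, (∀ e ∈ E, ∀ f ∈ E, ∑ x ∈ e, c x = ∑ x ∈ f, c x) ∧ ψ = pairing E c := by
  classical
  have hJ : ∀ v ∈ Jsub E, ψ v = 0 := fun v hv => hψ hv
  let c : V → ℂ := fun x => if h : ∃ e ∈ E, x ∈ e then ψ (delta E h.choose x) else 0
  have hc : ∀ e ∈ E, ∀ x ∈ e, ψ (delta E e x) = c x := by
    intro e he x hx
    have h : ∃ e ∈ E, x ∈ e := ⟨e, he, hx⟩
    have hdiff := hJ _ (Submodule.subset_span (Or.inr
      ⟨e, he, h.choose, h.choose_spec.1, x, hx, h.choose_spec.2, rfl⟩))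
    rw [map_sub, sub_eq_zero] at hdiff
    simp only [c, dif_pos h, hdiff]
  have hψc : ψ = pairing E c := by
    refine LinearMap.pi_ext fun i a => ?_
    obtain ⟨⟨e, x⟩, he, hx⟩ := i
    have hsingle : Pi.single (⟨(e, x), he, hx⟩ : Idx E) a = a • delta E e x := by
      rw [delta_eq_single he hx, ← Pi.single_smul, smul_eq_mul, mul_one]
    rw [hsingle, map_smul, map_smul, hc e he x hx, pairing_delta c he hx]
  refine ⟨c, fun e he f hf => ?_, hψc⟩
  have hdiff := hJ _ (Submodule.subset_span (Or.inl ⟨e, he, f, hf, rfl⟩))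
  rwa [map_sub, sub_eq_zero, hψc, pairing_oneEdge c he, pairing_oneEdge c hf] at hdiff

section Annihilator

variable {r : ℕ} (hr : 1 ≤ r) (hunif : ∀ e ∈ E, e.card = r) {u : Idx E → ℂ}
  (hu : ∀ p, IsModel E p → pairing E (fun x => (p x : ℂ)) u = 0)
include hr hunif hu

theorem pairing_ofReal_eq_zero {q : V → ℝ} (hq : ∀ e ∈ E, ∑ x ∈ e, q x = 0) :
    pairing E (fun x => (q x : ℂ)) u = 0 := by
  rcases hr.eq_or_lt with rfl | hr2
  · refine pairing_eq_zero_of_forall_mem (fun e he x hx => ?_) u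
    obtain ⟨a, rfl⟩ := Finset.card_eq_one.mp (hunif e he)
    rw [Finset.mem_singleton.mp hx]
    simpa using hq _ he
  · obtain ⟨ε, hε, hmodel⟩ := exists_isModel_const_add_smul hr2 hunif q hq
    have hsplit : (fun x => ((1 / r + ε * q x : ℝ) : ℂ)) =
        (fun _ => ((1 / r : ℝ) : ℂ)) + (ε : ℂ) • fun x => (q x : ℂ) := by
      ext x
      push_cast
      rfl
    have h := hu _ hmodel
    rw [hsplit, map_add, map_smul, LinearMap.add_apply, LinearMap.smul_apply,
      hu _ (isModel_const hr hunif), zero_add, smul_eq_mul] at h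
    exact (mul_eq_zero.mp h).resolve_left (by exact_mod_cast hε.ne')

theorem pairing_eq_zero_of_sum_eq_zero {d : V → ℂ} (hd : ∀ e ∈ E, ∑ x ∈ e, d x = 0) :
    pairing E d u = 0 := by
  have hsplit : d = (fun x => ((d x).re : ℂ)) + Complex.I • fun x => ((d x).im : ℂ) := by
    ext x
    simp [mul_comm Complex.I, Complex.re_add_im]
  have hre := pairing_ofReal_eq_zero hr hunif hu fun e he => by
    rw [← Complex.re_sum, hd e he, Complex.zero_re]
  have him := pairing_ofReal_eq_zero hr hunif hu fun e he => by
    rw [← Complex.im_sum, hd e he, Complex.zero_im]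
  rw [hsplit, map_add, map_smul, LinearMap.add_apply, LinearMap.smul_apply, hre, him,
    smul_zero, add_zero]

theorem pairing_eq_zero_of_sum_eq_sum (hE : E.Nonempty) {c : V → ℂ}
    (hc : ∀ e ∈ E, ∀ f ∈ E, ∑ x ∈ e, c x = ∑ x ∈ f, c x) : pairing E c u = 0 := by
  obtain ⟨e₀, he₀⟩ := hE
  set κ : V → ℂ := fun _ => ((1 / r : ℝ) : ℂ)
  have hκ : ∀ e ∈ E, ∑ x ∈ e, κ x = 1 := fun e he => by
    simp only [κ, ← Complex.ofReal_sum, (isModel_const hr hunif).2 e he, Complex.ofReal_one]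
  set s := ∑ x ∈ e₀, c x
  have hd : ∀ e ∈ E, ∑ x ∈ e, (c - s • κ) x = 0 := fun e he => by
    simp only [Pi.sub_apply, Pi.smul_apply, smul_eq_mul]
    rw [Finset.sum_sub_distrib, ← Finset.mul_sum, hκ e he, hc e he e₀ he₀, mul_one, sub_self]
  have hsplit : c = (c - s • κ) + s • κ := (sub_add_cancel c _).symm
  rw [hsplit, map_add, map_smul, LinearMap.add_apply, LinearMap.smul_apply,
    pairing_eq_zero_of_sum_eq_zero hr hunif hu hd, hu _ (isModel_const hr hunif), smul_zero,
    add_zero]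

end Annihilator

end Hypergraph

theorem stmt13_general (V : Type) [Fintype V] [DecidableEq V] (E : Finset (Finset V))
    (hEne : E.Nonempty)
    (r : ℕ) (hr : 1 ≤ r) (hunif : ∀ e ∈ E, e.card = r)
    (u : Idx E → ℂ) :
    u ∈ Jsub E ↔
      ∀ p : V → ℝ,
        ((∀ x, 0 ≤ p x ∧ p x ≤ 1) ∧ ∀ e ∈ E, ∑ x ∈ e, p x = 1) →
        ∑ i : Idx E, (p i.1.2 : ℂ) * u i = 0 := by
  constructor
  · intro hu p hp
    have hsums : ∀ e ∈ E, ∀ f ∈ E, ∑ x ∈ e, (p x : ℂ) = ∑ x ∈ f, (p x : ℂ) := fun e he f hf => by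
      simp only [← Complex.ofReal_sum, hp.2 e he, hp.2 f hf]
    exact Hypergraph.Jsub_le_ker_pairing hsums hu
  · intro hu
    by_contra hJ
    obtain ⟨ψ, hψu, hψJ⟩ := Submodule.exists_dual_map_eq_bot_of_notMem hJ inferInstance
    obtain ⟨c, hc, rfl⟩ :=
      Hypergraph.exists_pairing_eq_of_le_ker ψ (LinearMap.le_ker_iff_map.mpr hψJ)
    exact hψu (Hypergraph.pairing_eq_zero_of_sum_eq_sum hr hunif hu hEne hc)

theorem stmt13 (V : Type) [Fintype V] [DecidableEq V] (E : Finset (Finset V))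
    (hEne : E.Nonempty) (hene : ∀ e ∈ E, e.Nonempty)
    (r : ℕ) (hr : 1 ≤ r) (hunif : ∀ e ∈ E, e.card = r)
    (u : Idx E → ℂ) :
    u ∈ Jsub E ↔
      ∀ p : V → ℝ,
        ((∀ x, 0 ≤ p x ∧ p x ≤ 1) ∧ ∀ e ∈ E, ∑ x ∈ e, p x = 1) →
        ∑ i : Idx E, (p i.1.2 : ℂ) * u i = 0 :=
  stmt13_general V E hEne r hr hunif u
end
end

section
/- Let G₀ be the hypergraph with vertex set {x₁,x₂,x₃,x₄,x₅} and edges e₁={x₁,x₂}, e₂={x₃,x₄}, e₃={x₂,x₃,x₅}, e₄={x₁,x₄,x₅}. Then: (a) G₀ is not uniformisable; and (b) the element u ∈ S with u_{x₅}^{e₃} = u_{x₅}^{e₄} = 1 and all other entries 0 is a nonzero entrywise-nonnegative element of J, so J is not a null subspace. -/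
noncomputable section

open scoped ComplexOrder

/-- The hypergraph `G₀` on vertices `x₁,…,x₅` (encoded as `0,…,4 : Fin 5`) with edges
`e₁ = {x₁,x₂}`, `e₂ = {x₃,x₄}`, `e₃ = {x₂,x₃,x₅}`, `e₄ = {x₁,x₄,x₅}`. -/
def E0 : Finset (Finset (Fin 5)) := {{0, 1}, {2, 3}, {1, 2, 4}, {0, 3, 4}}

lemma gen1 {e f : Finset (Fin 5)} (he : e ∈ E0) (hf : f ∈ E0) :
    oneEdge E0 e - oneEdge E0 f ∈ Jsub E0 :=
  Submodule.subset_span (Or.inl ⟨e, he, f, hf, rfl⟩)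

lemma gen2 {e f : Finset (Fin 5)} {x : Fin 5} (he : e ∈ E0) (hf : f ∈ E0)
    (hxe : x ∈ e) (hxf : x ∈ f) : delta E0 e x - delta E0 f x ∈ Jsub E0 :=
  Submodule.subset_span (Or.inr ⟨e, he, f, hf, x, hxe, hxf, rfl⟩)

theorem stmt17 :
    -- (a) `G₀` is not uniformisable
    (¬ ∃ h : Fin 5 → ℕ, (∀ x, 1 ≤ h x) ∧
        ∀ e ∈ E0, ∀ f ∈ E0, ∑ x ∈ e, h x = ∑ x ∈ f, h x) ∧
    -- (b) the element `u` with `u_{x₅}^{e₃} = u_{x₅}^{e₄} = 1` and all other entries `0`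
    -- is a nonzero entrywise-nonnegative element of `J`
    (delta E0 {1, 2, 4} 4 + delta E0 {0, 3, 4} 4 ∈ Jsub E0 ∧
      delta E0 {1, 2, 4} (4 : Fin 5) + delta E0 {0, 3, 4} (4 : Fin 5) ≠ 0 ∧
      ∀ i, 0 ≤ (delta E0 {1, 2, 4} 4 + delta E0 {0, 3, 4} 4) i) := by
  refine ⟨?_, ?_, ?_, ?_⟩
  · rintro ⟨h, hpos, heq⟩
    have h13 := heq {0,1} (by decide) {1,2,4} (by decide)
    have h24 := heq {2,3} (by decide) {0,3,4} (by decide)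
    simp [Finset.sum_insert, Finset.mem_insert] at h13 h24
    have := hpos 4
    omega
  · have key : delta E0 {1,2,4} 4 + delta E0 {0,3,4} 4 =
      (oneEdge E0 {1,2,4} - oneEdge E0 {0,1}) + (oneEdge E0 {0,3,4} - oneEdge E0 {2,3})
      + (delta E0 {0,1} 1 - delta E0 {1,2,4} 1) + (delta E0 {2,3} 2 - delta E0 {1,2,4} 2)
      + (delta E0 {0,1} 0 - delta E0 {0,3,4} 0) + (delta E0 {2,3} 3 - delta E0 {0,3,4} 3) := by
      funext i
      obtain ⟨⟨e, x⟩, he, hx⟩ := i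
      fin_cases he <;> fin_cases hx <;>
        simp (config := { decide := true }) [oneEdge, delta, Finset.sum_insert,
          Finset.sum_singleton]
    rw [key]
    exact add_mem (add_mem (add_mem (add_mem (add_mem
      (gen1 (by decide) (by decide)) (gen1 (by decide) (by decide)))
      (gen2 (by decide) (by decide) (by decide) (by decide)))
      (gen2 (by decide) (by decide) (by decide) (by decide)))
      (gen2 (by decide) (by decide) (by decide) (by decide)))
      (gen2 (by decide) (by decide) (by decide) (by decide))
  · intro h0
    have := congrFun h0 ⟨({1,2,4}, 4), by decide, by decide⟩
    simp only [delta, Pi.add_apply, Pi.zero_apply,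
      if_pos rfl, if_neg (show (({1,2,4} : Finset (Fin 5)), (4:Fin 5)) ≠ ({0,3,4}, 4) by decide)] at this
    norm_num at this
  · intro i
    simp only [delta, Pi.add_apply]
    split_ifs <;> norm_num
end
end
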